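/- arXiv:1306.4772 — 3 statements merged into one kernel-verified Lean document; each statement's English description precedes it below -/
import Mathlib

section
/- Let a, b, d be real numbers with a·d > 0 and b/d > 1. Then for every positive integer n there exists a unique μₙ ∈ (πn, πn + π/2) satisfying the characteristic equation ((a/d)μ² + b/d)·sin μ = μ·cos μ. -/
/-!
Since `sin μ = (-1)ⁿ sin (μ - nπ)` and likewise for `cos`, the equation is `(-1)ⁿ` times
`charFun c e (nπ) μ = 0`. On `[nπ, nπ + π/2]` both `sin (μ - nπ)` and `cos (μ - nπ)` are
nonnegative, which makes the derivative `(2c+1) μ sin (μ - nπ) + (c μ² + e - 1) cos (μ - nπ)`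
positive inside; `charFun` goes from `-nπ` to `c (nπ + π/2)² + e > 0`, so it has exactly one zero.
-/

open Real Set

lemma StrictMonoOn.existsUnique_eq_zero_Ioo {f : ℝ → ℝ} {a b : ℝ} (hab : a ≤ b)
    (hcont : ContinuousOn f (Icc a b)) (hmono : StrictMonoOn f (Icc a b))
    (ha : f a < 0) (hb : 0 < f b) : ∃! x, x ∈ Ioo a b ∧ f x = 0 := by
  obtain ⟨x, hx, hfx⟩ := intermediate_value_Ioo hab hcont ⟨ha, hb⟩
  refine ⟨x, ⟨hx, hfx⟩, fun y ⟨hy, hfy⟩ => ?_⟩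
  exact hmono.injOn (Ioo_subset_Icc_self hy) (Ioo_subset_Icc_self hx) (hfy.trans hfx.symm)

noncomputable def charFun (c e L μ : ℝ) : ℝ := (c * μ ^ 2 + e) * sin (μ - L) - μ * cos (μ - L)

lemma charFun_left (c e L : ℝ) : charFun c e L L = -L := by
  simp [charFun]

lemma charFun_right (c e L : ℝ) : charFun c e L (L + π / 2) = c * (L + π / 2) ^ 2 + e := by
  simp [charFun]

lemma hasDerivAt_charFun (c e L μ : ℝ) :
    HasDerivAt (charFun c e L)
      ((2 * c + 1) * μ * sin (μ - L) + (c * μ ^ 2 + e - 1) * cos (μ - L)) μ := by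
  have hshift : HasDerivAt (fun x : ℝ => x - L) 1 μ := (hasDerivAt_id μ).sub_const L
  have hsin := (hasDerivAt_sin (μ - L)).comp μ hshift
  have hcos := (hasDerivAt_cos (μ - L)).comp μ hshift
  have hquad : HasDerivAt (fun x : ℝ => c * x ^ 2 + e) (c * (2 * μ)) μ := by
    simpa using ((hasDerivAt_pow 2 μ).const_mul c).add_const e
  refine ((hquad.mul hsin).sub ((hasDerivAt_id' μ).mul hcos)).congr_deriv ?_
  simp only [Function.comp_apply]
  ring

lemma strictMonoOn_charFun {c e L : ℝ} (hc : 0 ≤ c) (he : 1 ≤ e) (hL : 0 ≤ L) :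
    StrictMonoOn (charFun c e L) (Icc L (L + π / 2)) := by
  refine strictMonoOn_of_deriv_pos (convex_Icc _ _)
    (fun μ _ => (hasDerivAt_charFun c e L μ).continuousAt.continuousWithinAt) fun μ hμ => ?_
  rw [interior_Icc] at hμ
  obtain ⟨hLμ, hμR⟩ := hμ
  rw [(hasDerivAt_charFun c e L μ).deriv]
  have hsin : 0 < sin (μ - L) := sin_pos_of_pos_of_lt_pi (by linarith) (by linarith [pi_pos])
  have hcos : 0 < cos (μ - L) := cos_pos_of_mem_Ioo ⟨by linarith [pi_pos], by linarith⟩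
  have hμ : 0 < μ := by linarith
  have hslope : 0 < (2 * c + 1) * μ * sin (μ - L) := by positivity
  have hcoef : 0 ≤ c * μ ^ 2 + e - 1 := by nlinarith [mul_nonneg hc (sq_nonneg μ)]
  nlinarith [mul_nonneg hcoef hcos.le]

lemma existsUnique_charFun_eq_zero {c e L : ℝ} (hc : 0 ≤ c) (he : 1 < e) (hL : 0 < L) :
    ∃! μ, μ ∈ Ioo L (L + π / 2) ∧ charFun c e L μ = 0 := by
  refine (strictMonoOn_charFun hc he.le hL.le).existsUnique_eq_zero_Ioo (by linarith [pi_pos])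
    (fun μ _ => (hasDerivAt_charFun c e L μ).continuousAt.continuousWithinAt) ?_ ?_
  · rw [charFun_left]
    linarith
  · rw [charFun_right]
    nlinarith [mul_nonneg hc (sq_nonneg (L + π / 2))]

lemma charEq_iff_charFun_eq_zero (c e μ : ℝ) (n : ℕ) :
    (c * μ ^ 2 + e) * sin μ = μ * cos μ ↔ charFun c e (π * n) μ = 0 := by
  have hshift : charFun c e (π * n) μ = (-1) ^ n * ((c * μ ^ 2 + e) * sin μ - μ * cos μ) := by
    rw [charFun, mul_comm π, sin_sub_nat_mul_pi, cos_sub_nat_mul_pi]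
    ring
  rw [hshift, mul_eq_zero, sub_eq_zero, or_iff_right (pow_ne_zero n (by norm_num))]

theorem stmt2 (a b d : ℝ) (had : 0 < a * d) (hbd : 1 < b / d) :
    ∀ n : ℕ, 0 < n →
      ∃! μ : ℝ, μ ∈ Set.Ioo (Real.pi * n) (Real.pi * n + Real.pi / 2) ∧
        ((a / d) * μ ^ 2 + b / d) * Real.sin μ = μ * Real.cos μ := by
  intro n hn
  have hc : 0 ≤ a / d := (div_pos_iff.2 (mul_pos_iff.1 had)).le
  have hL : 0 < π * n := by positivity
  simpa only [charEq_iff_charFun_eq_zero _ _ _ n] using existsUnique_charFun_eq_zero hc hbd hL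
end

section
/- Let a, d > 0 and let μₙ be the unique root in (πn, πn + π/2) of the equation ((a/d)μ² + b/d)·sin μ = μ·cos μ, for n a positive integer. Then μₙ = πn + d/(aπn) + O(1/n³) as n → ∞. -/
set_option maxHeartbeats 1000000 in
theorem stmt3 (a b d : ℝ) (ha : 0 < a) (hd : 0 < d) (μ : ℕ → ℝ)
    (hmem : ∀ n : ℕ, 0 < n → μ n ∈ Set.Ioo (Real.pi * n) (Real.pi * n + Real.pi / 2))
    (hroot : ∀ n : ℕ, 0 < n →
      ((a / d) * (μ n) ^ 2 + b / d) * Real.sin (μ n) = μ n * Real.cos (μ n)) :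
    ∃ (C : ℝ) (N : ℕ), ∀ n : ℕ, N ≤ n →
      |μ n - (Real.pi * n + d / (a * Real.pi * n))| ≤ C / (n : ℝ) ^ 3 := by
  have hπ : (3:ℝ) < Real.pi := Real.pi_gt_three
  have hπ4 : Real.pi ≤ 4 := Real.pi_le_four
  set K : ℝ := 2*a*d*(2*d + |b|) + 4*d^3 with hK
  refine ⟨K / (a^3 * Real.pi^3), ⌈2*|b|/a⌉₊ + 1, ?_⟩
  intro n hn
  have hn1 : 0 < n := lt_of_lt_of_le (Nat.succ_pos _) hn
  have hnR : (1:ℝ) ≤ (n:ℝ) := by exact_mod_cast hn1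
  have hnb : 2*|b|/a + 1 ≤ (n:ℝ) := by
    have h1 : (2*|b|/a) ≤ (⌈2*|b|/a⌉₊ : ℝ) := Nat.le_ceil _
    have h2 : ((⌈2*|b|/a⌉₊ + 1 : ℕ) : ℝ) ≤ (n:ℝ) := by exact_mod_cast hn
    push_cast at h2; linarith only [h1, h2]
  obtain ⟨hm1, hm2⟩ := hmem n hn1
  have hroot' := hroot n hn1
  clear hmem hroot
  set m := μ n with hm; clear_value m
  set p := Real.pi * n with hp
  have hppos : 0 < p := by rw [hp]; positivity
  have h3n : 3 * (n:ℝ) ≤ p := by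
    rw [hp]
    have := mul_le_mul_of_nonneg_right hπ.le (by linarith only [hnR] : (0:ℝ) ≤ (n:ℝ))
    linarith only [this]
  clear_value p
  have hp3 : 3 ≤ p := by linarith only [h3n, hnR]
  set δ := m - p with hδ
  have hδ0 : 0 < δ := by rw [hδ]; linarith only [hm1]
  have hδπ : δ < Real.pi / 2 := by rw [hδ]; linarith only [hm2]
  clear_value δ
  have hmpos : 0 < m := by linarith only [hm1, hppos]
  have hm2p : m < 2 * p := by linarith only [hm2, hπ4, hp3]
  -- A = a m^2 + b is large
  set A := a * m^2 + b with hA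
  have hb1 : -|b| ≤ b := neg_abs_le b
  have hb2 : b ≤ |b| := le_abs_self b
  have hb0 : (0:ℝ) ≤ |b| := abs_nonneg b
  have habs : 2*|b| ≤ a * (n:ℝ) := by
    have h := (div_le_iff₀ ha).mp (by linarith only [hnb] : 2*|b|/a ≤ (n:ℝ))
    linarith only [h]
  have hann : 2*|b| ≤ a*(n:ℝ)^2 := by
    have h1 : a * (n:ℝ) * 1 ≤ a * (n:ℝ) * (n:ℝ) :=
      mul_le_mul_of_nonneg_left hnR (by positivity)
    nlinarith only [habs, h1]
  have hm3n : 3*(n:ℝ) ≤ m := by linarith only [h3n, hm1]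
  have hmsq : (3*(n:ℝ))^2 ≤ m^2 := by
    have h0 : (0:ℝ) ≤ 3*(n:ℝ) := by linarith only [hnR]
    nlinarith only [hm3n, h0]
  have hA2 : a * m^2 / 2 ≤ A := by
    rw [hA]
    have h9 : a * (3*(n:ℝ))^2 ≤ a * m^2 := mul_le_mul_of_nonneg_left hmsq ha.le
    linarith only [hann, hb1, hb0, h9, mul_nonneg ha.le (sq_nonneg (n:ℝ))]
  clear_value A
  have hApos : 0 < A := by
    have h1 : 0 < a * m^2 := by positivity
    linarith only [hA2, h1]
  -- the tangent equation:  A * sin δ = d * m * cos δ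
  have hmδ : m = δ + n * Real.pi := by rw [hδ, hp]; ring
  have hpow : ((-1:ℝ)^n) * ((-1:ℝ)^n) = 1 := by
    rw [← pow_add, Even.neg_one_pow ⟨n, rfl⟩]
  have htan : A * Real.sin δ = d * m * Real.cos δ := by
    have hdne : d ≠ 0 := ne_of_gt hd
    have h0 : (a * m^2 + b) * Real.sin m = m * Real.cos m * d := by
      field_simp at hroot'
      linear_combination hroot'
    rw [hmδ, Real.sin_add_nat_mul_pi, Real.cos_add_nat_mul_pi] at h0
    rw [hA, hmδ]
    calc (a * (δ + n*Real.pi)^2 + b) * Real.sin δ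
        = ((-1:ℝ)^n * (-1:ℝ)^n) * ((a * (δ + n*Real.pi)^2 + b) * Real.sin δ) := by
          rw [hpow]; ring
      _ = (-1:ℝ)^n * ((a * (δ + n*Real.pi)^2 + b) * ((-1:ℝ)^n * Real.sin δ)) := by ring
      _ = (-1:ℝ)^n * ((δ + n*Real.pi) * ((-1:ℝ)^n * Real.cos δ) * d) := by rw [h0]
      _ = ((-1:ℝ)^n * (-1:ℝ)^n) * ((δ + n*Real.pi) * Real.cos δ * d) := by ring
      _ = d * (δ + n*Real.pi) * Real.cos δ := by rw [hpow]; ring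
  have hcpos : 0 < Real.cos δ := Real.cos_pos_of_mem_Ioo ⟨by linarith only [hδ0, hπ], hδπ⟩
  have hspos : 0 < Real.sin δ := Real.sin_pos_of_pos_of_lt_pi hδ0 (by linarith only [hδπ, hπ])
  -- x := d m / A
  set x := d * m / A with hx
  have hxA : x * A = d * m := by rw [hx]; exact div_mul_cancel₀ _ (ne_of_gt hApos)
  have hxpos : 0 < x := by
    rw [hx]; exact div_pos (mul_pos hd hmpos) hApos
  clear_value x
  have hsx : Real.sin δ = x * Real.cos δ := by
    have h : A * Real.sin δ = A * (x * Real.cos δ) := by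
      linear_combination htan - Real.cos δ * hxA
    exact mul_left_cancel₀ (ne_of_gt hApos) h
  -- δ < x
  have hδx : δ < x := by
    have h1 : δ < Real.tan δ := Real.lt_tan hδ0 hδπ
    rwa [Real.tan_eq_sin_div_cos, hsx, mul_div_assoc, div_self (ne_of_gt hcpos), mul_one] at h1
  -- x - δ ≤ x^3/2
  have hlow : x - δ ≤ x^3 / 2 := by
    have h1 : Real.sin δ ≤ δ := Real.sin_le hδ0.le
    have h2 : 1 - δ^2/2 ≤ Real.cos δ := Real.one_sub_sq_div_two_le_cos
    have h3 : x * (1 - δ^2/2) ≤ δ := by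
      have h4 : x * (1 - δ^2/2) ≤ x * Real.cos δ := mul_le_mul_of_nonneg_left h2 hxpos.le
      linarith only [h4, hsx, h1]
    have h5 : δ^2 ≤ x^2 := by nlinarith only [hδx, hδ0]
    have h6 : x * δ^2 ≤ x * x^2 := mul_le_mul_of_nonneg_left h5 hxpos.le
    linarith only [h3, h6]
  clear htan hsx hcpos hspos hroot' hmδ hpow hπ4 hm2 hδπ
  -- x * (a * m) ≤ 2 d
  have hxam : x * (a * m) ≤ 2 * d := by
    have h1 : x * (a * m^2 / 2) ≤ x * A := mul_le_mul_of_nonneg_left hA2 hxpos.le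
    rw [hxA] at h1
    nlinarith only [h1, hmpos]
  -- q = d / (a p)
  set q := d / (a * p) with hq
  have hqap : q * (a * p) = d := by
    rw [hq]; exact div_mul_cancel₀ _ (by positivity)
  have hqpos : 0 < q := by
    rw [hq]; exact div_pos hd (mul_pos ha hppos)
  clear_value q
  have hkey : (x - q) * (A * a * p) = d * (-(a*m*δ) - b) := by
    rw [hδ]; linear_combination (a*p) * hxA - A * hqap - d * hA
  have hamδ : a * m * δ ≤ 2 * d := by
    have h1 : (a*m) * δ ≤ (a*m) * x :=
      mul_le_mul_of_nonneg_left hδx.le (mul_pos ha hmpos).le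
    linarith only [h1, hxam]
  have hApp : a * p^2 / 2 ≤ A := by
    have hpm : p^2 ≤ m^2 := by nlinarith only [hm1, hppos]
    have h := mul_le_mul_of_nonneg_left hpm ha.le
    linarith only [hA2, h]
  have hAap : a^2 * p^3 / 2 ≤ A * a * p := by
    have h1 : (a*p^2/2) * (a*p) ≤ A * (a*p) :=
      mul_le_mul_of_nonneg_right hApp (mul_pos ha hppos).le
    linarith only [h1]
  have hap3 : (0:ℝ) < a^3 * p^3 := by positivity
  have hXle : a^3 * p^3 ≤ 2*a*(A*a*p) := by
    have h1 : a * (a^2*p^3/2) ≤ a * (A*a*p) := mul_le_mul_of_nonneg_left hAap ha.le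
    linarith only [h1]
  have hU : (x - q) * (a^3 * p^3) ≤ 2*a*d*|b| := by
    have h1 : (x - q) * (A*a*p) ≤ d * |b| := by
      have h2 : d * (-|b|) ≤ d * b := mul_le_mul_of_nonneg_left hb1 hd.le
      have h3 : 0 ≤ d * (a*m*δ) :=
        mul_nonneg hd.le (mul_nonneg (mul_nonneg ha.le hmpos.le) hδ0.le)
      linarith only [hkey, h2, h3]
    rcases le_or_gt (x - q) 0 with h | h
    · have h4 : (x-q) * (a^3*p^3) ≤ 0 := mul_nonpos_of_nonpos_of_nonneg h hap3.le
      have h5 : 0 ≤ 2*a*d*|b| := by positivity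
      linarith only [h4, h5]
    · have h6 : (x-q) * (a^3*p^3) ≤ (x-q) * (2*a*(A*a*p)) :=
        mul_le_mul_of_nonneg_left hXle h.le
      have h7 : (2*a) * ((x-q)*(A*a*p)) ≤ (2*a) * (d*|b|) :=
        mul_le_mul_of_nonneg_left h1 (by positivity)
      linarith only [h6, h7]
  have hL : -(2*a*d*(2*d + |b|)) ≤ (x - q) * (a^3 * p^3) := by
    have h1 : -(d * (2*d + |b|)) ≤ (x - q) * (A*a*p) := by
      have h2 : d * b ≤ d * |b| := mul_le_mul_of_nonneg_left hb2 hd.le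
      have h3 : d * (a*m*δ) ≤ d * (2*d) := mul_le_mul_of_nonneg_left hamδ hd.le
      linarith only [hkey, h2, h3]
    rcases le_or_gt (x - q) 0 with h | h
    · have h6 : (x-q) * (2*a*(A*a*p)) ≤ (x-q) * (a^3*p^3) :=
        mul_le_mul_of_nonpos_left hXle h
      have h7 : (2*a) * (-(d*(2*d+|b|))) ≤ (2*a) * ((x-q)*(A*a*p)) :=
        mul_le_mul_of_nonneg_left h1 (by positivity)
      linarith only [h6, h7]
    · have h4 : 0 < (x-q) * (a^3*p^3) := mul_pos h hap3
      have h5 : 0 ≤ 2*a*d*(2*d+|b|) := by positivity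
      linarith only [h4, h5]
  -- x^3 * a^3 p^3 ≤ 8 d^3
  have hxap : x * (a * p) ≤ 2 * d := by
    have h := mul_le_mul_of_nonneg_left hm1.le (mul_pos hxpos ha).le
    nlinarith only [h, hxam]
  have hx3 : x^3 * (a^3 * p^3) ≤ 8 * d^3 := by
    have h : (x * (a*p))^3 ≤ (2*d)^3 := pow_le_pow_left₀ (by positivity) hxap 3
    nlinarith only [h]
  -- master bound
  have hmaster : |δ - q| * (a^3 * p^3) ≤ K := by
    rw [← abs_of_pos hap3, ← abs_mul, abs_le]
    constructor
    · have h5 : ((x - q) - x^3/2) * (a^3*p^3) ≤ (δ - q) * (a^3*p^3) :=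
        mul_le_mul_of_nonneg_right (by linarith only [hlow]) hap3.le
      rw [hK]; linarith only [h5, hL, hx3]
    · have h5 : (δ - q) * (a^3*p^3) ≤ (x - q) * (a^3*p^3) :=
        mul_le_mul_of_nonneg_right (by linarith only [hδx]) hap3.le
      have h6 : 0 ≤ a*d*d := by positivity
      have h7 : 0 < d^3 := by positivity
      rw [hK]; linarith only [h5, hU, h6, h7]
  -- conclude
  have hgoal_eq : m - (p + d / (a * Real.pi * n)) = δ - q := by
    rw [hδ, hq, hp]; ring_nf
  rw [hgoal_eq]
  rw [div_div, le_div_iff₀ (by positivity)]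
  have hp3e : p^3 = Real.pi^3 * (n:ℝ)^3 := by rw [hp]; ring
  calc |δ - q| * (a^3 * Real.pi^3 * (n:ℝ)^3) = |δ - q| * (a^3 * p^3) := by rw [hp3e]; ring
  _ ≤ K := hmaster
end

section
/- Let Q : [0,T] → ℝ be continuous and nonnegative, α ≥ 0, and k : [0,T]×[0,T] → ℝ continuous and nonnegative, and suppose Q(t) ≤ α + ∫₀ᵗ k(t,τ)Q(τ)dτ for all t ∈ [0,T]. Then Q(t) ≤ α·exp(∫₀ᵗ sup_{s∈[τ,t]} k(s,τ) dτ) for all t ∈ [0,T]. -/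
/-!
For `τ ≤ x ≤ t` the kernel `k x τ` is bounded by `g τ = sup_{s ∈ [τ, t]} k s τ`, so `Q` satisfies
the integral inequality `Q x ≤ α + ∫₀ˣ g Q` with a kernel of one variable, and the classical
Grönwall argument applies: `(α + ∫₀ˣ g Q) e^{-∫₀ˣ g}` has derivative
`g (Q - α - ∫₀ˣ g Q) e^{-∫₀ˣ g} ≤ 0`, hence is bounded by its value `α` at `0`.
-/

open Set Real

theorem ContinuousOn.hasDerivAt_integral_of_mem_Ioo {E : Type*} [NormedAddCommGroup E]
    [NormedSpace ℝ E] [CompleteSpace E] {f : ℝ → E} {a b x : ℝ}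
    (hf : ContinuousOn f (Icc a b)) (hx : x ∈ Ioo a b) :
    HasDerivAt (fun y => ∫ t in a..y, f t) (f x) x :=
  intervalIntegral.integral_hasDerivAt_right
    ((hf.mono (Icc_subset_Icc_right hx.2.le)).intervalIntegrable_of_Icc hx.1.le)
    ((hf.mono Ioo_subset_Icc_self).stronglyMeasurableAtFilter isOpen_Ioo x hx)
    (hf.continuousAt (Icc_mem_nhds hx.1 hx.2))

theorem ContinuousOn.continuousOn_primitive_Icc {E : Type*} [NormedAddCommGroup E]
    [NormedSpace ℝ E] {f : ℝ → E} {a b : ℝ} (hab : a ≤ b) (hf : ContinuousOn f (Icc a b)) :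
    ContinuousOn (fun y => ∫ t in a..y, f t) (Icc a b) := by
  rw [← uIcc_of_le hab] at hf ⊢
  exact intervalIntegral.continuousOn_primitive_interval (hf.integrableOn_compact isCompact_uIcc)

theorem image_max_Icc {a b τ : ℝ} (hτ : τ ∈ Icc a b) :
    (fun s => max s τ) '' Icc a b = Icc τ b := by
  ext s
  constructor
  · rintro ⟨s, hs, rfl⟩
    exact ⟨le_max_right _ _, max_le hs.2 hτ.2⟩
  · intro hs
    exact ⟨s, ⟨hτ.1.trans hs.1, hs.2⟩, max_eq_left hs.1⟩

theorem continuousOn_sSup_image_Icc {k : ℝ → ℝ → ℝ} {a b : ℝ}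
    (hk : ContinuousOn (fun z : ℝ × ℝ => k z.1 z.2) (Icc a b ×ˢ Icc a b)) :
    ContinuousOn (fun τ => sSup ((fun s => k s τ) '' Icc τ b)) (Icc a b) := by
  rcases lt_or_ge b a with hba | hab
  · simp [Icc_eq_empty_of_lt hba]
  set p : ℝ → ℝ := fun x => projIcc a b hab x
  have hp : Continuous p := continuous_subtype_val.comp continuous_projIcc
  have hpIcc : ∀ x, p x ∈ Icc a b := fun x => (projIcc a b hab x).2
  -- On the square `F τ s = k (max s τ) τ`, which turns the sup over the moving interval `[τ, b]`
  -- into one over the fixed compact `[a, b]`.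
  set F : ℝ → ℝ → ℝ := fun τ s => k (max (p s) (p τ)) (p τ)
  have hF : Continuous ↿F :=
    hk.comp_continuous (((hp.comp continuous_snd).max (hp.comp continuous_fst)).prodMk
      (hp.comp continuous_fst)) fun z =>
      ⟨⟨(hpIcc _).1.trans (le_max_left _ _), max_le (hpIcc _).2 (hpIcc _).2⟩, hpIcc _⟩
  refine ((isCompact_Icc (a := a) (b := b)).continuous_sSup hF).continuousOn.congr fun τ hτ => ?_
  rw [← image_max_Icc hτ, image_image]
  refine congrArg sSup (image_congr fun s hs => ?_)
  simp only [F, p, projIcc_of_mem hab hs, projIcc_of_mem hab hτ]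

theorem le_mul_exp_integral_of_le_add_integral {u g : ℝ → ℝ} {α a b : ℝ} (hab : a ≤ b)
    (hu : ContinuousOn u (Icc a b)) (hg : ContinuousOn g (Icc a b))
    (hg0 : ∀ x ∈ Icc a b, 0 ≤ g x) (h : ∀ x ∈ Icc a b, u x ≤ α + ∫ y in a..x, g y * u y) :
    u b ≤ α * exp (∫ y in a..b, g y) := by
  set G := fun x => ∫ y in a..x, g y
  set U := fun x => ∫ y in a..x, g y * u y
  have hgu : ContinuousOn (fun y => g y * u y) (Icc a b) := hg.mul hu
  have hψ : AntitoneOn (fun x => (α + U x) * exp (-G x)) (Icc a b) := by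
    refine antitoneOn_of_hasDerivWithinAt_nonpos (convex_Icc a b)
      (f' := fun x => g x * (u x - (α + U x)) * exp (-G x)) ?_ ?_ ?_
    · exact (continuousOn_const.add (hgu.continuousOn_primitive_Icc hab)).mul
        (hg.continuousOn_primitive_Icc hab).neg.rexp
    · intro x hx
      rw [interior_Icc] at hx
      have hU : HasDerivAt U (g x * u x) x := hgu.hasDerivAt_integral_of_mem_Ioo hx
      have hG : HasDerivAt G (g x) x := hg.hasDerivAt_integral_of_mem_Ioo hx
      exact (((hU.const_add α).mul hG.neg.exp).congr_deriv
        (by simp only [Pi.neg_apply]; ring)).hasDerivWithinAt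
    · intro x hx
      rw [interior_Icc] at hx
      have hx' : x ∈ Icc a b := Ioo_subset_Icc_self hx
      exact mul_nonpos_of_nonpos_of_nonneg
        (mul_nonpos_of_nonneg_of_nonpos (hg0 x hx') (sub_nonpos.2 (h x hx'))) (exp_pos _).le
  have hψb : (α + U b) * exp (-G b) ≤ α := by
    simpa [U, G] using hψ (left_mem_Icc.2 hab) (right_mem_Icc.2 hab) hab
  calc u b ≤ α + U b := h b (right_mem_Icc.2 hab)
    _ = (α + U b) * exp (-G b) * exp (G b) := by
      rw [mul_assoc, ← exp_add, neg_add_cancel, exp_zero, mul_one]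
    _ ≤ α * exp (G b) := mul_le_mul_of_nonneg_right hψb (exp_pos _).le

theorem stmt17_general (T α : ℝ) (Q : ℝ → ℝ) (k : ℝ → ℝ → ℝ)
    (hQ : ContinuousOn Q (Set.Icc 0 T))
    (hQ0 : ∀ t ∈ Set.Icc (0:ℝ) T, 0 ≤ Q t)
    (hk : ContinuousOn (fun z : ℝ × ℝ => k z.1 z.2) (Set.Icc 0 T ×ˢ Set.Icc 0 T))
    (hk0 : ∀ t ∈ Set.Icc (0:ℝ) T, ∀ τ ∈ Set.Icc (0:ℝ) T, 0 ≤ k t τ)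
    (hineq : ∀ t ∈ Set.Icc (0:ℝ) T, Q t ≤ α + ∫ τ in (0:ℝ)..t, k t τ * Q τ) :
    ∀ t ∈ Set.Icc (0:ℝ) T,
      Q t ≤ α * Real.exp (∫ τ in (0:ℝ)..t, sSup ((fun s => k s τ) '' Set.Icc τ t)) := by
  intro t ⟨ht0, htT⟩
  have hsub : Icc 0 t ⊆ Icc 0 T := Icc_subset_Icc_right htT
  have hkt := hk.mono (prod_mono hsub hsub)
  set g := fun τ => sSup ((fun s => k s τ) '' Icc τ t)
  have hg : ContinuousOn g (Icc 0 t) := continuousOn_sSup_image_Icc hkt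
  have hQt : ContinuousOn Q (Icc 0 t) := hQ.mono hsub
  have hk_le_g : ∀ x ∈ Icc 0 t, ∀ τ ∈ Icc 0 x, k x τ ≤ g τ := fun x hx τ hτ =>
    (hkt.comp (continuousOn_id.prodMk continuousOn_const) fun s hs =>
      ⟨⟨hτ.1.trans hs.1, hs.2⟩, hτ.1, hτ.2.trans hx.2⟩).le_sSup_image_Icc ⟨hτ.2, hx.2⟩
  refine le_mul_exp_integral_of_le_add_integral ht0 hQt hg
    (fun τ hτ => (hk0 τ (hsub hτ) τ (hsub hτ)).trans (hk_le_g τ hτ τ ⟨hτ.1, le_rfl⟩))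
    fun x hx => (hineq x (hsub hx)).trans (add_le_add le_rfl ?_)
  have hx_sub : Icc 0 x ⊆ Icc 0 t := Icc_subset_Icc_right hx.2
  refine intervalIntegral.integral_mono_on hx.1 ?_ ?_ fun τ hτ =>
    mul_le_mul_of_nonneg_right (hk_le_g x hx τ hτ) (hQ0 τ (hsub (hx_sub hτ)))
  · refine ContinuousOn.intervalIntegrable_of_Icc hx.1 (ContinuousOn.mul ?_ (hQt.mono hx_sub))
    exact hkt.comp (continuousOn_const.prodMk continuousOn_id) fun τ hτ => ⟨hx, hx_sub hτ⟩
  · exact ((hg.mono hx_sub).mul (hQt.mono hx_sub)).intervalIntegrable_of_Icc hx.1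

theorem stmt17 (T α : ℝ) (hT : 0 < T) (hα : 0 ≤ α) (Q : ℝ → ℝ) (k : ℝ → ℝ → ℝ)
    (hQ : ContinuousOn Q (Set.Icc 0 T))
    (hQ0 : ∀ t ∈ Set.Icc (0:ℝ) T, 0 ≤ Q t)
    (hk : ContinuousOn (fun z : ℝ × ℝ => k z.1 z.2) (Set.Icc 0 T ×ˢ Set.Icc 0 T))
    (hk0 : ∀ t ∈ Set.Icc (0:ℝ) T, ∀ τ ∈ Set.Icc (0:ℝ) T, 0 ≤ k t τ)
    (hineq : ∀ t ∈ Set.Icc (0:ℝ) T, Q t ≤ α + ∫ τ in (0:ℝ)..t, k t τ * Q τ) :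
    ∀ t ∈ Set.Icc (0:ℝ) T,
      Q t ≤ α * Real.exp (∫ τ in (0:ℝ)..t, sSup ((fun s => k s τ) '' Set.Icc τ t)) :=
  stmt17_general T α Q k hQ hQ0 hk hk0 hineq
end
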